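/- arXiv:2511.00946 — 5 statements merged into one kernel-verified Lean document; each statement's English description precedes it below -/
import Mathlib

section
/- Let p ≥ 2, N₁ ≥ 1, N_k ≥ 1 be integers and set N = N₁ + (p−1)·N_k + p − 1. Then ((7/3)·N − 2) / (max{(7/3)·N₁, (19/3)·N_k} + (10/3)·p − 19/3) < (7p+12)/19. -/
/-- For integers `p ≥ 2`, `N₁ ≥ 1`, `Nk ≥ 1` and `N = N₁ + (p-1)·Nk + p - 1`, the speedup
`((7/3)N - 2) / (max ((7/3)N₁) ((19/3)Nk) + (10/3)p - 19/3)` is strictly less than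
`(7p+12)/19`. -/
theorem speedup_strict_upper_bound (p N₁ Nk N : ℤ)
    (hp : 2 ≤ p) (hN₁ : 1 ≤ N₁) (hNk : 1 ≤ Nk)
    (hN : N = N₁ + (p - 1) * Nk + p - 1) :
    ((7/3) * (N : ℝ) - 2) /
        (max ((7/3) * (N₁ : ℝ)) ((19/3) * (Nk : ℝ)) + (10/3) * (p : ℝ) - 19/3)
      < (7 * (p : ℝ) + 12) / 19 := by
  have hpR : (2:ℝ) ≤ (p:ℝ) := by exact_mod_cast hp
  have hN₁R : (1:ℝ) ≤ (N₁:ℝ) := by exact_mod_cast hN₁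
  have hNkR : (1:ℝ) ≤ (Nk:ℝ) := by exact_mod_cast hNk
  have hNR : (N:ℝ) = (N₁:ℝ) + ((p:ℝ) - 1) * (Nk:ℝ) + (p:ℝ) - 1 := by
    rw [hN]; push_cast; ring
  set M := max ((7/3) * (N₁ : ℝ)) ((19/3) * (Nk : ℝ)) with hM
  have hM1 : (7/3) * (N₁:ℝ) ≤ M := le_max_left _ _
  have hM2 : (19/3) * (Nk:ℝ) ≤ M := le_max_right _ _
  have hD : 0 < M + (10/3) * (p:ℝ) - 19/3 := by nlinarith
  rw [div_lt_div_iff₀ hD (by norm_num : (0:ℝ) < 19)]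
  nlinarith [mul_le_mul_of_nonneg_left hM2 (by linarith : (0:ℝ) ≤ 7*((p:ℝ)-1)),
    mul_nonneg (by linarith : (0:ℝ) ≤ (p:ℝ)-2) (by linarith : (0:ℝ) ≤ 70*(p:ℝ)-6)]
end

section
/- Fix an integer p ≥ 2. For each integer N ≥ 2p, let (N₁(N), N_k(N)) be any pair of positive integers with N₁(N) + (p−1)·N_k(N) = N − p + 1 that minimizes max{(7/3)·N₁, (19/3)·N_k} over all such pairs. Then the ratio ((7/3)·N − 2) / (max{(7/3)·N₁(N), (19/3)·N_k(N)} + (10/3)·p − 19/3) converges to (7p+12)/19 as N → ∞. -/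
open Filter

set_option maxHeartbeats 800000

private lemma lin_ratio_tendsto (a b c d : ℝ) (hc : 0 < c) :
    Tendsto (fun x : ℝ => (a*x+b)/(c*x+d)) atTop (nhds (a/c)) := by
  have hb : Tendsto (fun x : ℝ => b/x) atTop (nhds 0) :=
    tendsto_const_nhds.div_atTop tendsto_id
  have hd : Tendsto (fun x : ℝ => d/x) atTop (nhds 0) :=
    tendsto_const_nhds.div_atTop tendsto_id
  have h1 : Tendsto (fun x : ℝ => (a + b/x)/(c + d/x)) atTop (nhds (a/c)) := by
    have h := ((tendsto_const_nhds : Tendsto (fun _ : ℝ => a) atTop (nhds a)).add hb).div (tendsto_const_nhds.add hd)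
      (by simpa using hc.ne')
    rw [add_zero, add_zero] at h
    exact h
  refine h1.congr' ?_
  filter_upwards [eventually_gt_atTop 0] with x hx
  have e1 : a + b/x = (a*x+b)/x := by field_simp
  have e2 : c + d/x = (c*x+d)/x := by field_simp
  rw [e1, e2, div_div_div_cancel_right₀]; exact hx.ne'

private lemma lin_ratio_tendsto_int (a b c d : ℝ) (hc : 0 < c) :
    Tendsto (fun N : ℤ => (a*(N:ℝ)+b)/(c*(N:ℝ)+d)) atTop (nhds (a/c)) :=
  (lin_ratio_tendsto a b c d hc).comp tendsto_intCast_atTop_atTop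

/-- Fix an integer `p ≥ 2`. If for every integer `N ≥ 2p` the pair
`(N₁ N, Nk N)` is a pair of positive integers with `N₁ N + (p-1)·Nk N = N - p + 1`
minimizing `max ((7/3)·N₁) ((19/3)·Nk)` over all such pairs, then the speedup
`((7/3)N - 2) / (max ((7/3)·N₁ N) ((19/3)·Nk N) + (10/3)p - 19/3)` tends to
`(7p+12)/19` as `N → ∞`. -/
theorem speedup_tendsto_max (p : ℤ) (hp : 2 ≤ p) (N₁ Nk : ℤ → ℤ)
    (hfeas : ∀ N : ℤ, 2 * p ≤ N →
      1 ≤ N₁ N ∧ 1 ≤ Nk N ∧ N₁ N + (p - 1) * Nk N = N - p + 1)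
    (hmin : ∀ N : ℤ, 2 * p ≤ N → ∀ a b : ℤ, 1 ≤ a → 1 ≤ b →
      a + (p - 1) * b = N - p + 1 →
      max ((7/3) * ((N₁ N : ℝ))) ((19/3) * ((Nk N : ℝ)))
        ≤ max ((7/3) * (a : ℝ)) ((19/3) * (b : ℝ))) :
    Tendsto
      (fun N : ℤ => ((7/3) * (N : ℝ) - 2) /
        (max ((7/3) * ((N₁ N : ℝ))) ((19/3) * ((Nk N : ℝ)))
          + (10/3) * (p : ℝ) - 19/3))
      atTop (nhds ((7 * (p : ℝ) + 12) / 19)) := by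
  have hpR : (2:ℝ) ≤ (p:ℝ) := by exact_mod_cast hp
  have hD : (0:ℝ) < 7*(p:ℝ)+12 := by linarith
  obtain ⟨c, hc_def⟩ : ∃ c : ℝ, c = 133/(3*(7*(p:ℝ)+12)) := ⟨_, rfl⟩
  have hc : 0 < c := by rw [hc_def]; positivity
  obtain ⟨d1, hd1_def⟩ : ∃ d1 : ℝ, d1 = c*(1-(p:ℝ)) + (10/3)*(p:ℝ) - 19/3 := ⟨_, rfl⟩
  have hlim_eq : (7/3 : ℝ)/c = (7*(p:ℝ)+12)/19 := by
    rw [hc_def]; field_simp; ring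
  have hlow : Tendsto (fun N : ℤ => ((7/3)*(N:ℝ) - 2)/(c*(N:ℝ) + (d1 + 19/3)))
      atTop (nhds ((7*(p:ℝ)+12)/19)) := by
    have := lin_ratio_tendsto_int (7/3) (-2) c (d1 + 19/3) hc
    rw [hlim_eq] at this
    exact this.congr fun N => by congr 1
  have hhigh : Tendsto (fun N : ℤ => ((7/3)*(N:ℝ) - 2)/(c*(N:ℝ) + d1))
      atTop (nhds ((7*(p:ℝ)+12)/19)) := by
    have := lin_ratio_tendsto_int (7/3) (-2) c d1 hc
    rw [hlim_eq] at this
    exact this.congr fun N => by congr 1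
  have hbounds : ∀ᶠ N : ℤ in atTop,
      ((7/3)*(N:ℝ) - 2)/(c*(N:ℝ) + (d1 + 19/3)) ≤
        ((7/3) * (N : ℝ) - 2) /
          (max ((7/3) * ((N₁ N : ℝ))) ((19/3) * ((Nk N : ℝ)))
            + (10/3) * (p : ℝ) - 19/3) ∧
        ((7/3) * (N : ℝ) - 2) /
          (max ((7/3) * ((N₁ N : ℝ))) ((19/3) * ((Nk N : ℝ)))
            + (10/3) * (p : ℝ) - 19/3) ≤
          ((7/3)*(N:ℝ) - 2)/(c*(N:ℝ) + d1) := by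
    filter_upwards [eventually_ge_atTop (2*p + p*(7*p+12) + 100)] with N hN
    have hpz : (0:ℤ) < p := by linarith
    have hDz : (0:ℤ) < 7*p+12 := by linarith
    have hpdz : (0:ℤ) < p*(7*p+12) := mul_pos hpz hDz
    have hN1 : 2*p ≤ N := by linarith
    have hS : p*(7*p+12) + 1 ≤ N - p + 1 := by linarith
    obtain ⟨ha1, hb1, hab⟩ := hfeas N hN1
    set M := max ((7/3) * ((N₁ N : ℝ))) ((19/3) * ((Nk N : ℝ))) with hM_def
    have habR : ((N₁ N : ℝ)) + ((p:ℝ)-1)*((Nk N : ℝ)) = (N:ℝ) - (p:ℝ) + 1 := by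
      exact_mod_cast hab
    have hpm1 : (0:ℝ) ≤ (p:ℝ)-1 := by linarith
    have hSR : (p:ℝ)*(7*(p:ℝ)+12) + 1 ≤ (N:ℝ) - (p:ℝ) + 1 := by exact_mod_cast hS
    have hSpos : (0:ℝ) < (N:ℝ) - (p:ℝ) + 1 := by nlinarith
    -- lower bound on M
    have hMl : c * ((N:ℝ) - (p:ℝ) + 1) ≤ M := by
      have h7 : (7/3)*((N₁ N : ℝ)) ≤ M := le_max_left _ _
      have h19 : (19/3)*((Nk N : ℝ)) ≤ M := le_max_right _ _
      have hprod : ((p:ℝ)-1)*((19/3)*((Nk N : ℝ))) ≤ ((p:ℝ)-1)*M :=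
        mul_le_mul_of_nonneg_left h19 hpm1
      rw [hc_def, div_mul_eq_mul_div, div_le_iff₀ (by linarith : (0:ℝ) < 3*(7*(p:ℝ)+12))]
      nlinarith [h7, hprod, habR]
    -- upper bound on M via explicit feasible pair
    set q : ℤ := (7*(N - p + 1)) / (7*p + 12) with hq_def
    set b0 : ℤ := q + 1 with hb0_def
    set a0 : ℤ := (N - p + 1) - (p-1)*b0 with ha0_def
    have hq0 : 0 ≤ q := Int.ediv_nonneg (by linarith) hDz.le
    have hb01 : 1 ≤ b0 := by omega
    have hed := Int.mul_ediv_add_emod (7*(N-p+1)) (7*p+12)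
    have hm0 := Int.emod_nonneg (7*(N-p+1)) (ne_of_gt hDz)
    have hm1 := Int.emod_lt_of_pos (7*(N-p+1)) hDz
    have hql : (7*p+12)*q ≤ 7*(N-p+1) := by rw [hq_def]; linarith
    have hqu : 7*(N-p+1) < (7*p+12)*(q+1) := by rw [hq_def]; linarith
    have hqlR : (7*(p:ℝ)+12)*(q:ℝ) ≤ 7*((N:ℝ)-(p:ℝ)+1) := by exact_mod_cast hql
    have hquR : 7*((N:ℝ)-(p:ℝ)+1) < (7*(p:ℝ)+12)*((q:ℝ)+1) := by exact_mod_cast hqu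
    have ha0R : (a0:ℝ) = ((N:ℝ)-(p:ℝ)+1) - ((p:ℝ)-1)*((q:ℝ)+1) := by
      rw [ha0_def, hb0_def]; push_cast; ring
    have hb0R : (b0:ℝ) = (q:ℝ)+1 := by rw [hb0_def]; push_cast; ring
    have ha0R1 : (1:ℝ) ≤ (a0:ℝ) := by
      rw [ha0R]
      nlinarith [hqlR, hSR, hpm1, hD, mul_le_mul_of_nonneg_left hqlR hpm1]
    have ha01 : (1:ℤ) ≤ a0 := by exact_mod_cast ha0R1
    have habz : a0 + (p-1)*b0 = N - p + 1 := by rw [ha0_def]; ring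
    have hMu := hmin N hN1 a0 b0 ha01 hb01 habz
    have hcS : c*((N:ℝ)-(p:ℝ)+1) + 19/3
        = (133*((N:ℝ)-(p:ℝ)+1) + 19*(7*(p:ℝ)+12))/(3*(7*(p:ℝ)+12)) := by
      rw [hc_def]; field_simp
    have hMur : M ≤ c*((N:ℝ)-(p:ℝ)+1) + 19/3 := by
      refine hMu.trans (max_le ?_ ?_)
      · rw [hcS, le_div_iff₀ (by linarith : (0:ℝ) < 3*(7*(p:ℝ)+12)), ha0R]
        linarith [mul_le_mul_of_nonneg_left hquR.le hpm1, hD]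
      · rw [hcS, le_div_iff₀ (by linarith : (0:ℝ) < 3*(7*(p:ℝ)+12)), hb0R]
        linarith [hqlR]
    -- assemble
    have hNR : (2*(p:ℝ) + (p:ℝ)*(7*(p:ℝ)+12) + 100) ≤ (N:ℝ) := by exact_mod_cast hN
    have hnum : (0:ℝ) ≤ (7/3)*(N:ℝ) - 2 := by nlinarith
    have hden1 : (0:ℝ) < c*(N:ℝ) + d1 := by
      have h1 : c*(N:ℝ) + d1 = c*((N:ℝ)-(p:ℝ)+1) + (10/3)*(p:ℝ) - 19/3 := by
        rw [hd1_def]; ring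
      rw [h1]
      nlinarith [mul_pos hc hSpos]
    have hDl : c*(N:ℝ) + d1 ≤ M + (10/3)*(p:ℝ) - 19/3 := by
      have h1 : c*(N:ℝ) + d1 = c*((N:ℝ)-(p:ℝ)+1) + (10/3)*(p:ℝ) - 19/3 := by
        rw [hd1_def]; ring
      linarith
    have hDu : M + (10/3)*(p:ℝ) - 19/3 ≤ c*(N:ℝ) + (d1 + 19/3) := by
      have h1 : c*(N:ℝ) + (d1 + 19/3) = c*((N:ℝ)-(p:ℝ)+1) + (10/3)*(p:ℝ) - 19/3 + 19/3 := by
        rw [hd1_def]; ring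
      linarith
    constructor
    · gcongr <;> linarith
    · gcongr <;> linarith
  exact tendsto_of_tendsto_of_tendsto_of_le_of_le' hlow hhigh
    (hbounds.mono fun N h => h.1) (hbounds.mono fun N h => h.2)
end

section
/- Let p ≥ 2, N₁ ≥ 1 and N₂, …, N_p ≥ 1 be integers, and set N = N₁ + Σ_{k=2}^p N_k + p − 1. Then the total flop count of the parallel Cholesky factorization, ((7/3)·N₁ − 1) + Σ_{k=2}^{p−1} ((19/3)·N_k − 1) + ((19/3)·N_p − 4) + ((10/3)·p − 16/3) (in units of b³), exceeds the sequential factorization flop count (7/3)·N − 2 by exactly 4·(Σ_{k=2}^p N_k − 1); in particular the total flop count of the parallel method is never smaller than that of the sequential method. -/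
/-- Total flop count (units of `b³`) of the parallel Cholesky factorization with
`p ≥ 2` threads, first-segment length `N₁ ≥ 1` and segment lengths `N_k ≥ 1`
for `k = 2,…,p`, where `N = N₁ + Σ_{k=2}^p N_k + p - 1`, exceeds the sequential
count `(7/3)·N - 2` by exactly `4·(Σ_{k=2}^p N_k - 1)`; in particular the parallel
total is never smaller than the sequential one. -/
theorem parallel_vs_sequential_total_flops (p N₁ : ℕ) (hp : 2 ≤ p) (hN₁ : 1 ≤ N₁)
    (Nk : ℕ → ℕ) (hNk : ∀ k ∈ Finset.Icc 2 p, 1 ≤ Nk k)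
    (N : ℕ) (hN : N = N₁ + (∑ k ∈ Finset.Icc 2 p, Nk k) + p - 1) :
    (((7/3 : ℝ) * (N₁ : ℝ) - 1) +
        (∑ k ∈ Finset.Icc 2 (p - 1), ((19/3 : ℝ) * (Nk k : ℝ) - 1)) +
        ((19/3) * (Nk p : ℝ) - 4) + ((10/3) * (p : ℝ) - 16/3)
      = ((7/3) * (N : ℝ) - 2) + 4 * ((∑ k ∈ Finset.Icc 2 p, (Nk k : ℝ)) - 1)) ∧
    (7/3 : ℝ) * (N : ℝ) - 2 ≤
      ((7/3 : ℝ) * (N₁ : ℝ) - 1) +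
        (∑ k ∈ Finset.Icc 2 (p - 1), ((19/3 : ℝ) * (Nk k : ℝ) - 1)) +
        ((19/3) * (Nk p : ℝ) - 4) + ((10/3) * (p : ℝ) - 16/3) := by
  obtain ⟨q, rfl⟩ : ∃ q, p = q + 2 := ⟨p - 2, by omega⟩
  subst hN
  have hsplit : ∀ f : ℕ → ℝ, ∑ k ∈ Finset.Icc 2 (q + 2), f k
      = (∑ k ∈ Finset.Icc 2 (q + 1), f k) + f (q + 2) := by
    intro f
    exact Finset.sum_Icc_succ_top (by omega) f
  have hS : ((∑ k ∈ Finset.Icc 2 (q + 2), Nk k : ℕ) : ℝ)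
      = ∑ k ∈ Finset.Icc 2 (q + 2), (Nk k : ℝ) := by push_cast; ring
  have hNcast : ((N₁ + (∑ k ∈ Finset.Icc 2 (q + 2), Nk k) + (q + 2) - 1 : ℕ) : ℝ)
      = (N₁ : ℝ) + (∑ k ∈ Finset.Icc 2 (q + 2), (Nk k : ℝ)) + (q : ℝ) + 1 := by
    rw [Nat.cast_sub (by omega)]
    push_cast
    ring
  have hsum1 : ∑ k ∈ Finset.Icc 2 (q + 2 - 1), ((19/3 : ℝ) * (Nk k : ℝ) - 1)
      = (19/3 : ℝ) * (∑ k ∈ Finset.Icc 2 (q + 1), (Nk k : ℝ)) - (q : ℝ) := by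
    have : q + 2 - 1 = q + 1 := by omega
    rw [this, Finset.sum_sub_distrib, ← Finset.mul_sum, Finset.sum_const,
      Nat.card_Icc]
    simp
  have hsum2 : ∑ k ∈ Finset.Icc 2 (q + 2), (Nk k : ℝ)
      = (∑ k ∈ Finset.Icc 2 (q + 1), (Nk k : ℝ)) + (Nk (q + 2) : ℝ) :=
    hsplit _
  have hSpos : (1 : ℝ) ≤ ∑ k ∈ Finset.Icc 2 (q + 2), (Nk k : ℝ) := by
    rw [hsum2]
    have h1 : (1 : ℝ) ≤ (Nk (q + 2) : ℝ) := by
      exact_mod_cast hNk (q + 2) (Finset.mem_Icc.mpr ⟨by omega, le_refl _⟩)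
    have h2 : (0 : ℝ) ≤ ∑ k ∈ Finset.Icc 2 (q + 1), (Nk k : ℝ) :=
      Finset.sum_nonneg fun k _ => by positivity
    linarith
  constructor
  · rw [hsum1, hNcast, hsum2]; push_cast; ring
  · rw [hsum1, hNcast, hsum2] at *
    push_cast at *
    linarith
end

section
/- Let n ≥ 1, b ≥ 1, b_g ≥ 1 be integers, and let A be a real symmetric positive definite block arrow matrix of size (n·b + b_g) × (n·b + b_g): A has b×b diagonal blocks D₁, …, D_n, bottom-row blocks G₁, …, G_n of size b_g×b, corner block R of size b_g×b_g, and all off-diagonal blocks among the D's are zero. For each i let D̂_i be the lower-triangular matrix with positive diagonal such that D̂_i·D̂_iᵀ = D_i (each D_i is positive definite), and set Ĝ_i = G_i·D̂_i⁻ᵀ. Then R − Σ_{i=1}^n Ĝ_i·Ĝ_iᵀ = R − Σ_{i=1}^n G_i·D_i⁻¹·G_iᵀ is symmetric positive definite, and with R̂ its lower-triangular Cholesky factor, the block arrow lower-triangular matrix L with diagonal blocks D̂_i, bottom-row blocks Ĝ_i and corner block R̂ satisfies L·Lᵀ = A. -/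
open Matrix

lemma posDef_submatrix_of_injective {l m : Type*} [Fintype l] [Fintype m] [DecidableEq l]
    [DecidableEq m] {M : Matrix m m ℝ} (hM : M.PosDef) (f : l → m)
    (hf : Function.Injective f) : (M.submatrix f f).PosDef := by
  refine PosDef.of_dotProduct_mulVec_pos (hM.1.submatrix f) fun x hx => ?_
  set y : m → ℝ := fun k => ∑ j, if k = f j then x j else 0 with hy
  have hyf : ∀ j, y (f j) = x j := by
    intro j
    simp only [hy]
    rw [Finset.sum_eq_single j]
    · simp
    · intro j' _ hj'; rw [if_neg (fun h => hj' (hf h).symm)]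
    · simp
  have hsum : ∀ g : m → ℝ, ∑ k, y k * g k = ∑ j, x j * g (f j) := by
    intro g
    simp only [hy, Finset.sum_mul, ite_mul, zero_mul]
    rw [Finset.sum_comm]
    simp
  have hyne : y ≠ 0 := by
    intro h
    apply hx
    funext j
    have := congrFun h (f j)
    simpa [hyf j] using this
  have := hM.dotProduct_mulVec_pos hyne
  simp only [star_trivial, dotProduct, mulVec, dotProduct] at this ⊢
  calc (0:ℝ) < ∑ k, y k * ∑ l, M k l * y l := this
    _ = ∑ j, x j * ∑ j', M.submatrix f f j j' * x j' := by
        rw [hsum]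
        refine Finset.sum_congr rfl fun j _ => ?_
        congr 1
        calc ∑ l, M (f j) l * y l = ∑ l, y l * M (f j) l := by simp [mul_comm]
          _ = ∑ j', x j' * M (f j) (f j') := hsum _
          _ = ∑ j', M.submatrix f f j j' * x j' := by simp [submatrix_apply, mul_comm]

lemma sum_ite_pull {α : Type*} [Fintype α] (p : Prop) [Decidable p] (f : α → ℝ) :
    (∑ y : α, if p then f y else 0) = if p then ∑ y : α, f y else 0 := by
  split <;> simp

/-- Arrow extension of the block Cholesky factorization: for a symmetric positive
definite block-arrow matrix `A` with `b×b` diagonal blocks `D i`, bottom-row blocks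
`G i` (size `bg×b`), corner block `R` (size `bg×bg`) and zero off-diagonal blocks among
the `D`'s, each `D i` is positive definite; with `Dh i` the lower-triangular
positive-diagonal Cholesky factor of `D i` and `Gh i = G i · Dhᵢ⁻ᵀ`, the matrix
`R - Σᵢ Gh i·(Gh i)ᵀ = R - Σᵢ G i·(D i)⁻¹·(G i)ᵀ` is symmetric positive definite, and
with `Rh` its lower-triangular Cholesky factor, the block-arrow lower-triangular matrix
`L` with diagonal blocks `Dh i`, bottom-row blocks `Gh i` and corner `Rh` satisfies
`L·Lᵀ = A`. -/
theorem blockArrow_cholesky (n b bg : ℕ) (hn : 1 ≤ n) (hb : 1 ≤ b) (hbg : 1 ≤ bg)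
    (A : Matrix ((Fin n × Fin b) ⊕ Fin bg) ((Fin n × Fin b) ⊕ Fin bg) ℝ)
    (hA : A.PosDef)
    (D : Fin n → Matrix (Fin b) (Fin b) ℝ)
    (G : Fin n → Matrix (Fin bg) (Fin b) ℝ)
    (R : Matrix (Fin bg) (Fin bg) ℝ)
    (hD : ∀ (i : Fin n) (a c : Fin b), D i a c = A (.inl (i, a)) (.inl (i, c)))
    (hoff : ∀ (i j : Fin n) (a c : Fin b), i ≠ j → A (.inl (i, a)) (.inl (j, c)) = 0)
    (hG : ∀ (i : Fin n) (r : Fin bg) (c : Fin b), G i r c = A (.inr r) (.inl (i, c)))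
    (hGsym : ∀ (i : Fin n) (a : Fin b) (r : Fin bg),
      A (.inl (i, a)) (.inr r) = G i r a)
    (hR : ∀ r s : Fin bg, R r s = A (.inr r) (.inr s))
    (Dh : Fin n → Matrix (Fin b) (Fin b) ℝ)
    (hDhtri : ∀ (i : Fin n) (a c : Fin b), a < c → Dh i a c = 0)
    (hDhdiag : ∀ (i : Fin n) (a : Fin b), 0 < Dh i a a)
    (hDh : ∀ i : Fin n, Dh i * (Dh i)ᵀ = D i)
    (Gh : Fin n → Matrix (Fin bg) (Fin b) ℝ)
    (hGh : ∀ i : Fin n, Gh i = G i * ((Dh i)⁻¹)ᵀ) :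
    (∀ i : Fin n, (D i).PosDef) ∧
    (R - ∑ i : Fin n, Gh i * (Gh i)ᵀ = R - ∑ i : Fin n, G i * (D i)⁻¹ * (G i)ᵀ) ∧
    (R - ∑ i : Fin n, Gh i * (Gh i)ᵀ).PosDef ∧
    ∀ Rh : Matrix (Fin bg) (Fin bg) ℝ,
      (∀ r s : Fin bg, r < s → Rh r s = 0) →
      Rh * Rhᵀ = R - ∑ i : Fin n, Gh i * (Gh i)ᵀ →
      ∀ L : Matrix ((Fin n × Fin b) ⊕ Fin bg) ((Fin n × Fin b) ⊕ Fin bg) ℝ,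
        (∀ (i j : Fin n) (a c : Fin b),
          L (.inl (i, a)) (.inl (j, c)) = if i = j then Dh i a c else 0) →
        (∀ (i : Fin n) (a : Fin b) (r : Fin bg), L (.inl (i, a)) (.inr r) = 0) →
        (∀ (i : Fin n) (r : Fin bg) (c : Fin b), L (.inr r) (.inl (i, c)) = Gh i r c) →
        (∀ r s : Fin bg, L (.inr r) (.inr s) = Rh r s) →
        L * Lᵀ = A := by
  -- each D i is positive definite
  have hDpos : ∀ i : Fin n, (D i).PosDef := by
    intro i
    have heq : D i = A.submatrix (fun c : Fin b => Sum.inl (i, c))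
        (fun c : Fin b => Sum.inl (i, c)) := by
      ext a c
      rw [hD]
      rfl
    rw [heq]
    exact posDef_submatrix_of_injective hA _ (fun a c h => by
      simpa using (Prod.mk.injEq .. ▸ (Sum.inl.injEq .. ▸ h : (i, a) = (i, c))).2)
  have hDhdet : ∀ i, IsUnit (Dh i).det := by
    intro i
    have h1 : (Dh i).det * (Dh i).det = (D i).det := by
      rw [← hDh i, det_mul, det_transpose]
    refine isUnit_iff_ne_zero.mpr fun h => ?_
    rw [h, mul_zero] at h1
    exact (hDpos i).det_pos.ne' h1.symm
  have hDinv : ∀ i, (D i)⁻¹ = ((Dh i)⁻¹)ᵀ * (Dh i)⁻¹ := by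
    intro i
    rw [← hDh i, Matrix.mul_inv_rev, Matrix.transpose_nonsing_inv]
  have hGhGh : ∀ i, Gh i * (Gh i)ᵀ = G i * (D i)⁻¹ * (G i)ᵀ := by
    intro i
    rw [hGh i, transpose_mul, transpose_transpose, hDinv i]
    simp only [Matrix.mul_assoc]
  have hsum_eq : R - ∑ i : Fin n, Gh i * (Gh i)ᵀ
      = R - ∑ i : Fin n, G i * (D i)⁻¹ * (G i)ᵀ := by
    rw [Finset.sum_congr rfl fun i _ => hGhGh i]
  have hGhDh : ∀ i, Gh i * (Dh i)ᵀ = G i := by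
    intro i
    rw [hGh i, Matrix.mul_assoc, ← transpose_mul, Matrix.mul_nonsing_inv _ (hDhdet i),
      transpose_one, Matrix.mul_one]
  -- block structure
  set M : Matrix (Fin n × Fin b) (Fin n × Fin b) ℝ := A.submatrix Sum.inl Sum.inl with hMdef
  set B : Matrix (Fin n × Fin b) (Fin bg) ℝ := A.submatrix Sum.inl Sum.inr with hBdef
  have hMpos : M.PosDef := posDef_submatrix_of_injective hA Sum.inl Sum.inl_injective
  haveI : Invertible M := M.invertibleOfIsUnitDet hMpos.det_pos.ne'.isUnit
  have hAblocks : A = fromBlocks M B Bᴴ (A.submatrix Sum.inr Sum.inr) := by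
    ext k l
    cases k with
    | inl p =>
      cases l with
      | inl q => rfl
      | inr r => rfl
    | inr r =>
      cases l with
      | inl q =>
        have h := congrFun (congrFun hA.1 (Sum.inr r)) (Sum.inl q)
        simp only [conjTranspose_apply, star_trivial] at h
        simpa [fromBlocks, hBdef, conjTranspose_apply] using h.symm
      | inr s => rfl
  have hSpos : (A.submatrix Sum.inr Sum.inr - Bᴴ * M⁻¹ * B).PosDef := by
    refine PosDef.of_dotProduct_mulVec_pos ?_ ?_
    · have h1 : (fromBlocks M B Bᴴ (A.submatrix Sum.inr Sum.inr)).IsHermitian :=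
        hAblocks ▸ hA.1
      exact (Matrix.IsHermitian.fromBlocks₁₁ B _ hMpos.1).mp h1
    · intro x hx
      have hyne : (-((M⁻¹ * B) *ᵥ x) ⊕ᵥ x) ≠ 0 := by
        intro h
        apply hx
        funext r
        exact congrFun h (Sum.inr r)
      have h2 := hA.dotProduct_mulVec_pos hyne
      rw [hAblocks, dotProduct_mulVec,
        schur_complement_eq₁₁ B (A.submatrix Sum.inr Sum.inr) _ _ hMpos.1] at h2
      rw [dotProduct_mulVec]
      simpa using h2
  -- identify the Schur complement
  set N : Matrix (Fin n × Fin b) (Fin n × Fin b) ℝ :=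
    Matrix.of (fun p q => if p.1 = q.1 then (D p.1)⁻¹ p.2 q.2 else 0) with hNdef
  have hMent : ∀ (i k : Fin n) (a e : Fin b),
      M (i, a) (k, e) = if i = k then D i a e else 0 := by
    intro i k a e
    by_cases h : i = k
    · subst h; simp [hMdef, submatrix_apply, ← hD]
    · simp [hMdef, submatrix_apply, hoff i k a e h, h]
  have hMN : M * N = 1 := by
    ext ⟨i, a⟩ ⟨j, c⟩
    simp only [mul_apply, Fintype.sum_prod_type, hMent, hNdef, of_apply, ite_mul, zero_mul]
    rw [Finset.sum_eq_single i]
    · by_cases h : i = j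
      · subst h
        have h1 := congrFun (congrFun (Matrix.mul_nonsing_inv (D i)
          (hDpos i).det_pos.ne'.isUnit) a) c
        simp only [mul_apply, one_apply] at h1
        simpa [one_apply, Prod.ext_iff] using h1
      · simp [h, one_apply, Prod.ext_iff]
    · intro k _ hk
      rcases eq_or_ne i k with h | h
      · exact (hk h.symm).elim
      · simp [h]
    · simp
  have hMinv : M⁻¹ = N := inv_eq_right_inv hMN
  have hSchur : Bᴴ * M⁻¹ * B = ∑ i : Fin n, G i * (D i)⁻¹ * (G i)ᵀ := by
    rw [hMinv]
    ext r s
    simp only [Matrix.mul_assoc, mul_apply, Fintype.sum_prod_type, conjTranspose_apply,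
      star_trivial, hNdef, of_apply, Matrix.sum_apply, hBdef, submatrix_apply,
      transpose_apply, mul_ite, mul_zero, sum_ite_pull, Finset.sum_ite_eq',
      Finset.mem_univ, if_true]
    refine Finset.sum_congr rfl fun j _ => ?_
    simp only [hGsym, Finset.sum_mul, Finset.mul_sum]
    rw [Finset.sum_comm]
    exact Finset.sum_congr rfl fun e _ => Finset.sum_congr rfl fun y _ => by ring
  have hSeq : R - ∑ i : Fin n, Gh i * (Gh i)ᵀ
      = A.submatrix Sum.inr Sum.inr - Bᴴ * M⁻¹ * B := by
    rw [hsum_eq, hSchur]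
    congr 1
    ext r s
    exact hR r s
  refine ⟨hDpos, hsum_eq, by rw [hSeq]; exact hSpos, ?_⟩
  intro Rh _ hRhRh L hL11 hL12 hL21 hL22
  ext k l
  cases k with
  | inl p =>
    obtain ⟨i, a⟩ := p
    cases l with
    | inl q =>
      obtain ⟨j, c⟩ := q
      show ∑ k', L (Sum.inl (i, a)) k' * Lᵀ k' (Sum.inl (j, c)) = _
      simp only [transpose_apply, Fintype.sum_sum_type, Fintype.sum_prod_type, hL11, hL12,
        ite_mul, zero_mul, mul_ite, mul_zero, sum_ite_pull, Finset.sum_ite_eq,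
        Finset.mem_univ, if_true, Finset.sum_const_zero, add_zero]
      by_cases h : i = j
      · subst h
        simp only [if_true, ite_self, eq_self_iff_true]
        have hDh' := congrFun (congrFun (hDh i) a) c
        simp only [mul_apply, transpose_apply] at hDh'
        rw [hDh']
        exact hD i a c
      · rw [hoff i j a c h, if_neg h]
    | inr r =>
      show ∑ k', L (Sum.inl (i, a)) k' * Lᵀ k' (Sum.inr r) = _
      simp only [transpose_apply, Fintype.sum_sum_type, Fintype.sum_prod_type, hL11, hL12,
        hL21, ite_mul, zero_mul, sum_ite_pull, Finset.sum_ite_eq, Finset.mem_univ, if_true,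
        Finset.sum_const_zero, add_zero]
      have hg := congrFun (congrFun (hGhDh i) r) a
      simp only [mul_apply, transpose_apply] at hg
      rw [hGsym, ← hg]
      exact Finset.sum_congr rfl fun c' _ => mul_comm _ _
  | inr r =>
    cases l with
    | inl q =>
      obtain ⟨j, c⟩ := q
      show ∑ k', L (Sum.inr r) k' * Lᵀ k' (Sum.inl (j, c)) = _
      simp only [transpose_apply, Fintype.sum_sum_type, Fintype.sum_prod_type, hL21, hL11,
        hL12, mul_ite, mul_zero, sum_ite_pull, Finset.sum_ite_eq, Finset.mem_univ, if_true,
        zero_mul, Finset.sum_const_zero, add_zero]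
      have hg := congrFun (congrFun (hGhDh j) r) c
      simp only [mul_apply, transpose_apply] at hg
      rw [← hG, ← hg]
    | inr s =>
      show ∑ k', L (Sum.inr r) k' * Lᵀ k' (Sum.inr s) = _
      simp only [transpose_apply, Fintype.sum_sum_type, Fintype.sum_prod_type, hL21, hL22]
      have h1 := congrFun (congrFun hRhRh r) s
      simp only [mul_apply, transpose_apply, Matrix.sub_apply, Matrix.sum_apply] at h1
      rw [h1, ← hR r s]
      ring
end

section
/- Let n ≥ 1 and b ≥ 1 be integers, and let L be a real block lower-bidiagonal matrix of size n·b × n·b with invertible b×b diagonal blocks D̂_i and subdiagonal blocks Ê_i (all other blocks zero). Given a vector r with b-blocks r₁, …, r_n, define y by the forward recursion y₁ = D̂₁⁻¹·r₁ and y_{i+1} = D̂_{i+1}⁻¹·(r_{i+1} − Ê_i·y_i); then L·y = r. Furthermore, define x by the backward recursion x_n = D̂_n⁻ᵀ·y_n and x_i = D̂_i⁻ᵀ·(y_i − Ê_iᵀ·x_{i+1}); then Lᵀ·x = y, and consequently (L·Lᵀ)·x = r. -/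
open Matrix

/-- Forward/backward substitution for a block lower-bidiagonal matrix `L` with
invertible diagonal blocks `Dh i` and subdiagonal blocks `Eh i`: the forward recursion
`y₀ = Dh₀⁻¹·r₀`, `yᵢ₊₁ = Dhᵢ₊₁⁻¹·(rᵢ₊₁ - Ehᵢ·yᵢ)` satisfies `L·y = r`; the backward
recursion `xₙ₋₁ = Dhₙ₋₁⁻ᵀ·yₙ₋₁`, `xᵢ = Dhᵢ⁻ᵀ·(yᵢ - Ehᵢᵀ·xᵢ₊₁)` satisfies `Lᵀ·x = y`,
and consequently `(L·Lᵀ)·x = r`. -/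
theorem blockBidiag_triangular_solve (n b : ℕ) (hn : 1 ≤ n) (hb : 1 ≤ b)
    (Dh Eh : ℕ → Matrix (Fin b) (Fin b) ℝ)
    (hDh : ∀ i : ℕ, IsUnit (Dh i).det)
    (L : Matrix (Fin n × Fin b) (Fin n × Fin b) ℝ)
    (hL : ∀ (i j : Fin n) (a c : Fin b),
      L (i, a) (j, c) =
        if (i : ℕ) = (j : ℕ) then Dh (i : ℕ) a c
        else if (i : ℕ) = (j : ℕ) + 1 then Eh (j : ℕ) a c else 0)
    (r : Fin n × Fin b → ℝ)
    (y : ℕ → Fin b → ℝ)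
    (hy0 : y 0 = (Dh 0)⁻¹.mulVec fun a => r (⟨0, by omega⟩, a))
    (hyrec : ∀ (i : ℕ) (h : i + 1 < n),
      y (i + 1) = (Dh (i + 1))⁻¹.mulVec
        ((fun a => r (⟨i + 1, h⟩, a)) - (Eh i).mulVec (y i)))
    (x : ℕ → Fin b → ℝ)
    (hxlast : x (n - 1) = ((Dh (n - 1))ᵀ)⁻¹.mulVec (y (n - 1)))
    (hxrec : ∀ (i : ℕ), i + 1 < n →
      x i = ((Dh i)ᵀ)⁻¹.mulVec (y i - (Eh i)ᵀ.mulVec (x (i + 1)))) :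
    L.mulVec (fun q => y (q.1 : ℕ) q.2) = r ∧
    Lᵀ.mulVec (fun q => x (q.1 : ℕ) q.2) = (fun q => y (q.1 : ℕ) q.2) ∧
    (L * Lᵀ).mulVec (fun q => x (q.1 : ℕ) q.2) = r := by
  have hDinv : ∀ (k : ℕ) (w : Fin b → ℝ), (Dh k).mulVec ((Dh k)⁻¹.mulVec w) = w := by
    intro k w
    rw [Matrix.mulVec_mulVec, Matrix.mul_nonsing_inv _ (hDh k), Matrix.one_mulVec]
  have hDTinv : ∀ (k : ℕ) (w : Fin b → ℝ), (Dh k)ᵀ.mulVec (((Dh k)ᵀ)⁻¹.mulVec w) = w := by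
    intro k w
    rw [Matrix.mulVec_mulVec, Matrix.mul_nonsing_inv _ (by simpa using hDh k), Matrix.one_mulVec]
  have hLz : ∀ (i j : Fin n) (a c : Fin b),
      (i : ℕ) ≠ (j : ℕ) → (i : ℕ) ≠ (j : ℕ) + 1 → L (i, a) (j, c) = 0 := by
    intro i j a c h1 h2
    rw [hL]; simp [h1, h2]
  have h1 : L.mulVec (fun q => y (q.1 : ℕ) q.2) = r := by
    funext q
    obtain ⟨⟨k, hk⟩, a⟩ := q
    show ∑ p : Fin n × Fin b, L (⟨k, hk⟩, a) p * y (p.1 : ℕ) p.2 = _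
    rw [Fintype.sum_prod_type]
    match k, hk with
    | 0, hk =>
      rw [Finset.sum_eq_single (⟨0, hk⟩ : Fin n)]
      · have : ∀ c, L ((⟨0, hk⟩ : Fin n), a) (⟨0, hk⟩, c) = Dh 0 a c := by
          intro c; rw [hL]; simp
        simp only [this]
        have : ∑ c, Dh 0 a c * y 0 c = (Dh 0).mulVec (y 0) a := rfl
        rw [this, hy0, hDinv]
      · intro j _ hj
        apply Finset.sum_eq_zero; intro c _
        have hjv : (0 : ℕ) ≠ (j : ℕ) := by
          intro h; exact hj (by apply Fin.ext; simp [← h])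
        rw [hLz _ _ _ _ hjv (by simp)]; ring
      · intro h; exact absurd (Finset.mem_univ _) h
    | (m+1), hk =>
      have hm : m < n := by omega
      have hne : (⟨m, hm⟩ : Fin n) ≠ ⟨m+1, hk⟩ := by
        simp [Fin.ext_iff]
      rw [← Finset.sum_subset (Finset.subset_univ ({⟨m, hm⟩, ⟨m+1, hk⟩} : Finset (Fin n)))
        (fun j _ hj => ?_), Finset.sum_pair hne]
      · have e1 : ∀ c, L ((⟨m+1, hk⟩ : Fin n), a) (⟨m, hm⟩, c) = Eh m a c := by
          intro c; rw [hL]; simp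
        have e2 : ∀ c, L ((⟨m+1, hk⟩ : Fin n), a) (⟨m+1, hk⟩, c) = Dh (m+1) a c := by
          intro c; rw [hL]; simp
        simp only [e1, e2]
        have t1 : ∑ c, Eh m a c * y m c = (Eh m).mulVec (y m) a := rfl
        have t2 : ∑ c, Dh (m+1) a c * y (m+1) c = (Dh (m+1)).mulVec (y (m+1)) a := rfl
        rw [t1, t2, hyrec m hk, hDinv]
        simp
      · simp only [Finset.mem_insert, Finset.mem_singleton] at hj
        push_neg at hj
        apply Finset.sum_eq_zero; intro c _
        have hj1 : (m+1 : ℕ) ≠ (j : ℕ) := by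
          intro h; exact hj.2 (by apply Fin.ext; simp [← h])
        have hj2 : (m+1 : ℕ) ≠ (j : ℕ) + 1 := by
          intro h; exact hj.1 (by apply Fin.ext; simp; omega)
        rw [hLz _ _ _ _ hj1 hj2]; ring
  have h2 : Lᵀ.mulVec (fun q => x (q.1 : ℕ) q.2) = (fun q => y (q.1 : ℕ) q.2) := by
    funext q
    obtain ⟨⟨k, hk⟩, a⟩ := q
    show ∑ p : Fin n × Fin b, L p (⟨k, hk⟩, a) * x (p.1 : ℕ) p.2 = y k a
    rw [Fintype.sum_prod_type]
    by_cases hk1 : k + 1 < n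
    · have hne : (⟨k, hk⟩ : Fin n) ≠ ⟨k+1, hk1⟩ := by
        intro h; exact absurd (congrArg Fin.val h) (by simp)
      rw [← Finset.sum_subset (Finset.subset_univ ({⟨k, hk⟩, ⟨k+1, hk1⟩} : Finset (Fin n)))
        (fun j _ hj => ?_), Finset.sum_pair hne]
      · have e1 : ∀ c, L ((⟨k, hk⟩ : Fin n), c) (⟨k, hk⟩, a) = (Dh k)ᵀ a c := by
          intro c; rw [hL]; simp [Matrix.transpose_apply]
        have e2 : ∀ c, L ((⟨k+1, hk1⟩ : Fin n), c) (⟨k, hk⟩, a) = (Eh k)ᵀ a c := by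
          intro c; rw [hL]; simp [Matrix.transpose_apply]
        simp only [e1, e2]
        have t1 : ∑ c, (Dh k)ᵀ a c * x k c = (Dh k)ᵀ.mulVec (x k) a := rfl
        have t2 : ∑ c, (Eh k)ᵀ a c * x (k+1) c = (Eh k)ᵀ.mulVec (x (k+1)) a := rfl
        rw [t1, t2, hxrec k hk1, hDTinv]
        simp
      · simp only [Finset.mem_insert, Finset.mem_singleton] at hj
        push_neg at hj
        apply Finset.sum_eq_zero; intro c _
        have hj1 : (j : ℕ) ≠ (k : ℕ) := by
          intro h; exact hj.1 (by apply Fin.ext; simp [h])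
        have hj2 : (j : ℕ) ≠ (k : ℕ) + 1 := by
          intro h; exact hj.2 (by apply Fin.ext; simp [h])
        rw [hLz _ _ _ _ hj1 hj2]; ring
    · have hkn : k = n - 1 := by omega
      rw [Finset.sum_eq_single (⟨k, hk⟩ : Fin n)]
      · have e1 : ∀ c, L ((⟨k, hk⟩ : Fin n), c) (⟨k, hk⟩, a) = (Dh k)ᵀ a c := by
          intro c; rw [hL]; simp [Matrix.transpose_apply]
        simp only [e1]
        have t1 : ∑ c, (Dh k)ᵀ a c * x k c = (Dh k)ᵀ.mulVec (x k) a := rfl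
        rw [t1, hkn, hxlast, hDTinv]
      · intro j _ hj
        apply Finset.sum_eq_zero; intro c _
        have hj1 : (j : ℕ) ≠ (k : ℕ) := by
          intro h; exact hj (by apply Fin.ext; simp [h])
        have hj2 : (j : ℕ) ≠ (k : ℕ) + 1 := by
          intro h
          have : (j : ℕ) < n := j.isLt
          omega
        rw [hLz _ _ _ _ hj1 hj2]; ring
      · intro h; exact absurd (Finset.mem_univ _) h
  refine ⟨h1, h2, ?_⟩
  rw [← Matrix.mulVec_mulVec, h2, h1]
end
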